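/- arXiv:2105.03350 — 7 statements merged into one kernel-verified Lean document; each statement's English description precedes it below -/
import Mathlib

section
/- Let F be the unique formal power series over ℚ with (1 - X)·F = (1 - X) + X·F², and write a(n) for the coefficient of Xⁿ in F. Then a(0) = 1, a(1) = 1, and for all n ≥ 2, a(n) = a(n-1) + Σ_{k=0}^{n-1} a(k)·a(n-1-k). -/
open PowerSeries

/-!
Rearranged, the functional equation reads `F = 1 + X * (F + F ^ 2 - 1)`, so `a (n + 1)` is
the coefficient of `Xⁿ` in `F + F ^ 2 - 1`. This gives `a 0 = 1`, then `a 1 = a 0 + a 0 ^ 2 - 1 = 1`,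
and for `n ≥ 1` the recurrence, with the sum being the Cauchy product in `F ^ 2`.
-/

namespace PowerSeries

variable {R : Type*} [CommRing R]

theorem coeff_sq_eq_sum_range (F : R⟦X⟧) (n : ℕ) :
    coeff n (F ^ 2) = ∑ k ∈ Finset.range (n + 1), coeff k F * coeff (n - k) F := by
  rw [sq, coeff_mul, Finset.Nat.sum_antidiagonal_eq_sum_range_succ_mk]

theorem eq_one_add_X_mul_of_one_sub_X_mul_eq {F : R⟦X⟧}
    (hF : (1 - X) * F = (1 - X) + X * F ^ 2) : F = 1 + X * (F + F ^ 2 - 1) := by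
  linear_combination hF

theorem coeff_zero_eq_one_of_one_sub_X_mul_eq {F : R⟦X⟧}
    (hF : (1 - X) * F = (1 - X) + X * F ^ 2) : coeff 0 F = 1 := by
  rw [eq_one_add_X_mul_of_one_sub_X_mul_eq hF]
  simp

theorem coeff_succ_eq_of_one_sub_X_mul_eq {F : R⟦X⟧}
    (hF : (1 - X) * F = (1 - X) + X * F ^ 2) (n : ℕ) :
    coeff (n + 1) F = coeff n (F + F ^ 2 - 1) := by
  conv_lhs => rw [eq_one_add_X_mul_of_one_sub_X_mul_eq hF]
  simp [coeff_one]

end PowerSeries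

/-- Recurrence for the coefficients of the generating function of multi-edge trees:
`a 0 = 1`, `a 1 = 1`, and `a n = a (n-1) + ∑_{k=0}^{n-1} a k * a (n-1-k)` for `n ≥ 2`. -/
theorem multi_edge_tree_coeff_recurrence (F : PowerSeries ℚ)
    (hF : (1 - X) * F = (1 - X) + X * F ^ 2) :
    coeff 0 F = 1 ∧ coeff 1 F = 1 ∧
      ∀ n : ℕ, 2 ≤ n →
        coeff n F =
          coeff (n - 1) F +
            ∑ k ∈ Finset.range n, coeff k F * coeff (n - 1 - k) F := by
  have h0 := coeff_zero_eq_one_of_one_sub_X_mul_eq hF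
  refine ⟨h0, ?_, fun n hn => ?_⟩
  · rw [coeff_succ_eq_of_one_sub_X_mul_eq hF 0, map_sub, map_add, coeff_sq_eq_sum_range]
    simp [h0]
  · obtain ⟨m, rfl⟩ : ∃ m, n = m + 2 := ⟨n - 2, by omega⟩
    rw [coeff_succ_eq_of_one_sub_X_mul_eq hF (m + 1), map_sub, map_add, coeff_sq_eq_sum_range,
      coeff_one, if_neg m.succ_ne_zero, sub_zero]
    rfl
end

section
/- There exists a unique formal power series M over ℚ satisfying the functional equation M = 1 + 3·X·M + X²·M². -/
/-!
Comparing coefficients turns `M = 1 + c X M + X² M²` into the first-step recursion of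
`c`-coloured Motzkin paths, which therefore defines a solution. Two solutions `M`, `N` satisfy
`(1 - c X - X² (N + M)) (N - M) = 0`, and the first factor has constant coefficient `1`, so it is
a unit in `R⟦X⟧` and `N = M`.
-/

open PowerSeries

namespace PowerSeries

variable {R : Type*} [CommRing R]

/-- A path of length `n + 2` begins with one of `c` level steps, or with an up step whose matching
down step encloses a path of length `i` and is followed by one of length `n - i`. -/
def motzkinCoeff (c : R) : ℕ → R
  | 0 => 1
  | 1 => c
  | n + 2 => c * motzkinCoeff c (n + 1) +
      ∑ i : Fin (n + 1), motzkinCoeff c i * motzkinCoeff c (n - i)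

def motzkinSeries (c : R) : R⟦X⟧ :=
  mk (motzkinCoeff c)

theorem motzkinSeries_eq (c : R) :
    motzkinSeries c = 1 + C c * X * motzkinSeries c + X ^ 2 * motzkinSeries c ^ 2 := by
  ext n
  simp only [map_add, mul_assoc, coeff_C_mul]
  rcases n with _ | _ | n
  · simp [motzkinSeries, motzkinCoeff]
  · simp [motzkinSeries, motzkinCoeff, coeff_X_pow_mul']
  · rw [coeff_succ_X_mul, coeff_X_pow_mul', if_pos (by omega), show n + 1 + 1 - 2 = n by omega,
      pow_two, coeff_mul, Finset.Nat.sum_antidiagonal_eq_sum_range_succ_mk, Finset.sum_range]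
    simp [motzkinSeries, motzkinCoeff]

theorem motzkin_solution_unique {c : R} {M N : R⟦X⟧}
    (hM : M = 1 + C c * X * M + X ^ 2 * M ^ 2) (hN : N = 1 + C c * X * N + X ^ 2 * N ^ 2) :
    N = M := by
  have hfactor : (1 - C c * X - X ^ 2 * (N + M)) * (N - M) = 0 := by
    linear_combination hN - hM
  have hunit : IsUnit (1 - C c * X - X ^ 2 * (N + M)) :=
    isUnit_iff_constantCoeff.mpr (by simp)
  exact sub_eq_zero.mp (hunit.mul_right_eq_zero.mp hfactor)

end PowerSeries

/-- There exists a unique formal power series `M` over `ℚ` satisfying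
`M = 1 + 3 * X * M + X ^ 2 * M ^ 2`. -/
theorem motzkin3_gf_exists_unique :
    ∃! M : PowerSeries ℚ, M = 1 + 3 * X * M + X ^ 2 * M ^ 2 := by
  have hC : (C (3 : ℚ) : ℚ⟦X⟧) = 3 := map_ofNat C 3
  refine ⟨motzkinSeries 3, hC ▸ motzkinSeries_eq 3, fun N hN => ?_⟩
  exact motzkin_solution_unique (motzkinSeries_eq 3) (hC ▸ hN)
end

section
/- Let F be the unique formal power series over ℚ with (1 - X)·F = (1 - X) + X·F², and let M be the unique formal power series over ℚ with M = 1 + 3·X·M + X²·M². Then F = 1 + X·M in ℚ⟦X⟧. -/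
open PowerSeries

namespace PowerSeries

variable {R : Type*} [CommRing R]

def IsMultiEdgeTreeGF (F : R⟦X⟧) : Prop :=
  (1 - X) * F = (1 - X) + X * F ^ 2

/-- Subtracting the equations for `F` and `G` gives `(1 - X - X (F + G)) (F - G) = 0`, and the
first factor has constant coefficient `1`. -/
theorem IsMultiEdgeTreeGF.unique {F G : R⟦X⟧} (hF : IsMultiEdgeTreeGF F)
    (hG : IsMultiEdgeTreeGF G) : F = G := by
  unfold IsMultiEdgeTreeGF at hF hG
  have hfactor : (1 - X - X * (F + G)) * (F - G) = 0 := by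
    linear_combination hF - hG
  have hunit : IsUnit (1 - X - X * (F + G)) :=
    isUnit_iff_constantCoeff.mpr (by simp)
  exact sub_eq_zero.mp (hunit.mul_right_eq_zero.mp hfactor)

theorem isMultiEdgeTreeGF_one_add_X_mul {M : R⟦X⟧}
    (hM : M = 1 + 3 * X * M + X ^ 2 * M ^ 2) : IsMultiEdgeTreeGF (1 + X * M) := by
  unfold IsMultiEdgeTreeGF
  linear_combination X * hM

end PowerSeries

/-- The generating function `F` of multi-edge trees and the generating function `M`
of 3-coloured Motzkin paths satisfy `F = 1 + X * M`. -/
theorem multi_edge_tree_eq_one_add_X_mul_motzkin (F M : PowerSeries ℚ)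
    (hF : (1 - X) * F = (1 - X) + X * F ^ 2)
    (hM : M = 1 + 3 * X * M + X ^ 2 * M ^ 2) :
    F = 1 + X * M :=
  IsMultiEdgeTreeGF.unique hF (isMultiEdgeTreeGF_one_add_X_mul hM)
end

section
/- Let M be the unique formal power series over ℚ with M = 1 + 3·X·M + X²·M². For every natural number n, the number of 3-coloured Motzkin paths of length n equals the coefficient of Xⁿ in M. -/
open PowerSeries

/-- A step of a 3-coloured Motzkin path: an up-step, a down-step, or a horizontal
step in one of three colours. -/
inductive Step3 : Type
  | up : Step3
  | down : Step3
  | level : Fin 3 → Step3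

/-- The value (height change) of a step. -/
def Step3.val : Step3 → ℤ
  | .up => 1
  | .down => -1
  | .level _ => 0

/-- A list of steps is a 3-coloured Motzkin path if every prefix sum of the values
is nonnegative and the total sum is `0`. -/
def IsMotzkin3 (l : List Step3) : Prop :=
  (∀ t : List Step3, t <+: l → 0 ≤ (t.map Step3.val).sum) ∧ (l.map Step3.val).sum = 0

/-!
Cutting a nonempty Motzkin path after its first step: either that step is a level step (three
colours) followed by a Motzkin path, or it is an up-step, and the first return to height `0` writes
the path uniquely as `up :: p ++ down :: q` with `p`, `q` Motzkin paths. Hence the counting series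
satisfies `M = 1 + 3XM + X²M²`. That equation has only one solution: the difference `D` of two
solutions `M`, `N` satisfies `D = X (3 + X (M + N)) D`, so `D` is divisible by every power of `X`.
-/

namespace Step3

@[simp] lemma val_up : up.val = 1 := rfl
@[simp] lemma val_down : down.val = -1 := rfl
@[simp] lemma val_level (c : Fin 3) : (level c).val = 0 := rfl

def height (l : List Step3) : ℤ := (l.map val).sum

@[simp] lemma height_nil : height [] = 0 := rfl

@[simp] lemma height_cons (a : Step3) (l : List Step3) : height (a :: l) = a.val + height l := by
  simp [height]

@[simp] lemma height_append (l₁ l₂ : List Step3) : height (l₁ ++ l₂) = height l₁ + height l₂ := by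
  simp [height]

def StaysAbove (c : ℤ) (l : List Step3) : Prop := ∀ t, t <+: l → c ≤ height t

lemma StaysAbove.le_zero {c : ℤ} {l : List Step3} (h : StaysAbove c l) : c ≤ 0 :=
  h [] List.nil_prefix

lemma not_staysAbove_of_pos {c : ℤ} (hc : 0 < c) (l : List Step3) : ¬ StaysAbove c l :=
  fun h => (h.le_zero.trans_lt hc).false

lemma StaysAbove.le_height {c : ℤ} {l : List Step3} (h : StaysAbove c l) : c ≤ height l :=
  h l (List.prefix_refl l)

lemma StaysAbove.mono {c c' : ℤ} {l : List Step3} (h : StaysAbove c l) (hc : c' ≤ c) :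
    StaysAbove c' l :=
  fun t ht => hc.trans (h t ht)

@[simp] lemma staysAbove_nil {c : ℤ} : StaysAbove c [] ↔ c ≤ 0 := by
  simp [StaysAbove]

@[simp] lemma staysAbove_cons {c : ℤ} {a : Step3} {l : List Step3} :
    StaysAbove c (a :: l) ↔ c ≤ 0 ∧ StaysAbove (c - a.val) l := by
  simp only [StaysAbove, List.prefix_cons_iff]
  constructor
  · intro h
    refine ⟨by simpa using h [] (.inl rfl), fun t ht => ?_⟩
    have := h (a :: t) (.inr ⟨t, rfl, ht⟩)
    rw [height_cons] at this
    omega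
  · rintro ⟨hc, h⟩ t (rfl | ⟨t, rfl, ht⟩)
    · simpa using hc
    · have := h t ht
      rw [height_cons]
      omega

@[simp] lemma staysAbove_append {c : ℤ} {l₁ l₂ : List Step3} :
    StaysAbove c (l₁ ++ l₂) ↔ StaysAbove c l₁ ∧ StaysAbove (c - height l₁) l₂ := by
  induction l₁ generalizing c with
  | nil => simpa using fun h : StaysAbove c l₂ => h.le_zero
  | cons a l₁ ih => simp [ih, and_assoc, sub_sub]

end Step3

open Step3

lemma isMotzkin3_iff {l : List Step3} : IsMotzkin3 l ↔ StaysAbove 0 l ∧ height l = 0 := Iff.rfl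

lemma isMotzkin3_nil : IsMotzkin3 [] := by
  simp [isMotzkin3_iff]

lemma isMotzkin3_level_cons_iff {c : Fin 3} {l : List Step3} :
    IsMotzkin3 (level c :: l) ↔ IsMotzkin3 l := by
  simp [isMotzkin3_iff]

lemma not_isMotzkin3_down_cons (l : List Step3) : ¬ IsMotzkin3 (down :: l) := by
  simp [isMotzkin3_iff, not_staysAbove_of_pos]

lemma not_staysAbove_append_down_cons {p : List Step3} (hp : height p = 0) (r : List Step3) :
    ¬ StaysAbove 0 (p ++ down :: r) := by
  simp [hp, not_staysAbove_of_pos]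

lemma exists_first_return {l : List Step3} (h : StaysAbove (-1) l) :
    StaysAbove 0 l ∨ ∃ p q, l = p ++ down :: q ∧ IsMotzkin3 p ∧ StaysAbove 0 q := by
  -- Induct from the right: appending a step can create the first return, but never move it.
  induction l using List.reverseRecOn with
  | nil => simp
  | append_singleton l a ih =>
    simp only [staysAbove_append, staysAbove_cons, staysAbove_nil] at h ⊢
    rcases ih h.1 with hl | ⟨p, q, rfl, hp, hq⟩
    · have := hl.le_height
      rcases a with _ | _ | c
      · exact .inl ⟨hl, by omega, by simp; omega⟩
      · by_cases hl0 : height l = 0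
        · exact .inr ⟨l, [], rfl, ⟨hl, hl0⟩, by simp⟩
        · exact .inl ⟨hl, by omega, by simp; omega⟩
      · exact .inl ⟨hl, by omega, by simp; omega⟩
    · refine .inr ⟨p, q ++ [a], by simp, hp, ?_⟩
      rw [staysAbove_append, staysAbove_cons, staysAbove_nil]
      have hp0 : height p = 0 := hp.2
      have := hq.le_height
      simp only [height_append, height_cons, val_down] at h
      exact ⟨hq, by omega, by omega⟩

lemma isMotzkin3_up_cons_iff {l : List Step3} :
    IsMotzkin3 (up :: l) ↔ ∃ p q, l = p ++ down :: q ∧ IsMotzkin3 p ∧ IsMotzkin3 q := by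
  simp only [isMotzkin3_iff]
  constructor
  · rintro ⟨hl, hl0⟩
    rw [staysAbove_cons] at hl
    simp only [height_cons, val_up] at hl0
    rcases exists_first_return hl.2 with hl' | ⟨p, q, rfl, hp, hq⟩
    · exact absurd hl'.le_height (by omega)
    · have hp0 : height p = 0 := hp.2
      simp only [height_append, height_cons, val_down, hp0] at hl0
      exact ⟨p, q, rfl, hp, hq, by omega⟩
  · rintro ⟨p, q, rfl, ⟨hp, hp0⟩, ⟨hq, hq0⟩⟩
    refine ⟨?_, by simp [hp0, hq0]⟩
    simp only [staysAbove_cons, staysAbove_append, val_up, val_down, hp0]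
    exact ⟨le_rfl, hp.mono (by norm_num), by norm_num, hq.mono (by norm_num)⟩

lemma eq_of_append_down_cons_eq {p₁ q₁ p₂ q₂ : List Step3}
    (h : p₁ ++ down :: q₁ = p₂ ++ down :: q₂) (hp₁ : IsMotzkin3 p₁) (hp₂ : IsMotzkin3 p₂) :
    p₁ = p₂ ∧ q₁ = q₂ := by
  rcases List.append_eq_append_iff.1 h with ⟨_ | ⟨a, r⟩, rfl, h'⟩ | ⟨_ | ⟨a, r⟩, rfl, h'⟩
  · simpa using h'
  · obtain ⟨rfl, -⟩ := List.cons_eq_cons.1 h'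
    exact absurd hp₂.1 (not_staysAbove_append_down_cons hp₁.2 r)
  · simpa [eq_comm] using h'
  · obtain ⟨rfl, -⟩ := List.cons_eq_cons.1 h'
    exact absurd hp₁.1 (not_staysAbove_append_down_cons hp₂.2 r)

instance : Finite Step3 :=
  Finite.of_injective (β := Bool ⊕ Fin 3)
    (fun | .up => .inl true | .down => .inl false | .level c => .inr c)
    (by rintro (_ | _ | _) (_ | _ | _) h <;> simp_all)

abbrev Motzkin3Path (n : ℕ) : Type := {l : List Step3 // l.length = n ∧ IsMotzkin3 l}

namespace Motzkin3Path

instance (n : ℕ) : Finite (Motzkin3Path n) :=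
  ((List.finite_length_eq Step3 n).subset fun _ hl => hl.1).to_subtype

lemma card_zero : Nat.card (Motzkin3Path 0) = 1 :=
  Nat.card_eq_one_iff_exists.2 ⟨⟨[], rfl, isMotzkin3_nil⟩,
    fun ⟨_, hl, _⟩ => Subtype.ext (List.length_eq_zero_iff.1 hl)⟩

def glue (n : ℕ) :
    Fin 3 × Motzkin3Path n ⊕ (Σ k : Fin n, Motzkin3Path k × Motzkin3Path (n - 1 - k)) →
      Motzkin3Path (n + 1)
  | .inl (c, p) => ⟨level c :: p.1, by simp [p.2.1], isMotzkin3_level_cons_iff.2 p.2.2⟩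
  | .inr ⟨k, p, q⟩ => ⟨up :: (p.1 ++ down :: q.1), by simp [p.2.1, q.2.1]; omega,
      isMotzkin3_up_cons_iff.2 ⟨p.1, q.1, rfl, p.2.2, q.2.2⟩⟩

lemma glue_injective (n : ℕ) : Function.Injective (glue n) := by
  rintro (⟨c₁, p₁⟩ | ⟨k₁, p₁, q₁⟩) (⟨c₂, p₂⟩ | ⟨k₂, p₂, q₂⟩) h <;>
    simp only [glue, Subtype.mk.injEq, List.cons.injEq, level.injEq, reduceCtorEq, false_and] at h
  · obtain ⟨rfl, h⟩ := h
    simp [Subtype.ext h]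
  · obtain ⟨hp, hq⟩ := eq_of_append_down_cons_eq h.2 p₁.2.2 p₂.2.2
    obtain rfl : k₁ = k₂ := Fin.ext (by rw [← p₁.2.1, ← p₂.2.1, hp])
    simp [Subtype.ext hp, Subtype.ext hq]

lemma glue_surjective (n : ℕ) : Function.Surjective (glue n) := by
  rintro ⟨_ | ⟨_ | _ | c, l⟩, hlen, hl⟩
  · simp at hlen
  · obtain ⟨p, q, rfl, hp, hq⟩ := isMotzkin3_up_cons_iff.1 hl
    simp only [List.length_cons, List.length_append] at hlen
    exact ⟨.inr ⟨⟨p.length, by omega⟩, ⟨p, rfl, hp⟩, ⟨q, by simp; omega, hq⟩⟩, rfl⟩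
  · exact absurd hl (not_isMotzkin3_down_cons l)
  · exact ⟨.inl (c, ⟨l, by simpa using hlen, isMotzkin3_level_cons_iff.1 hl⟩), rfl⟩

lemma card_succ (n : ℕ) :
    Nat.card (Motzkin3Path (n + 1)) =
      3 * Nat.card (Motzkin3Path n) +
        ∑ k : Fin n, Nat.card (Motzkin3Path k) * Nat.card (Motzkin3Path (n - 1 - k)) := by
  rw [← Nat.card_eq_of_bijective _ ⟨glue_injective n, glue_surjective n⟩, Nat.card_sum,
    Nat.card_prod, Nat.card_sigma]
  simp [Nat.card_prod]

end Motzkin3Path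

namespace PowerSeries

variable {R : Type*}

lemma eq_zero_of_eq_X_mul_mul [CommSemiring R] {f g : R⟦X⟧} (h : f = X * g * f) : f = 0 := by
  have hdvd : ∀ n, (X : R⟦X⟧) ^ n ∣ f := by
    intro n
    induction n with
    | zero => simp
    | succ n ih =>
      rw [h, pow_succ', mul_assoc]
      exact mul_dvd_mul_left X (dvd_mul_of_dvd_right ih g)
  ext n
  simpa using X_pow_dvd_iff.1 (hdvd (n + 1)) n n.lt_succ_self

lemma eq_of_eq_add_X_mul_add_X_sq_mul_sq [CommRing R] {a b M N : R⟦X⟧}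
    (hM : M = b + a * X * M + X ^ 2 * M ^ 2) (hN : N = b + a * X * N + X ^ 2 * N ^ 2) :
    M = N := by
  refine sub_eq_zero.1 (eq_zero_of_eq_X_mul_mul (g := a + X * (M + N)) ?_)
  linear_combination hM - hN

lemma coeff_succ_X_sq_mul_sq [Semiring R] (F : R⟦X⟧) (n : ℕ) :
    coeff (n + 1) (X ^ 2 * F ^ 2) = ∑ k : Fin n, coeff k F * coeff (n - 1 - k) F := by
  rw [coeff_X_pow_mul']
  rcases n with _ | n
  · simp
  · rw [if_pos (by omega), sq, coeff_mul, Finset.Nat.sum_antidiagonal_eq_sum_range_succ_mk,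
      Fin.sum_univ_eq_sum_range (fun k => coeff k F * coeff (n + 1 - 1 - k) F)]
    simp

end PowerSeries

noncomputable def motzkin3Series : ℚ⟦X⟧ := mk fun n => (Nat.card (Motzkin3Path n) : ℚ)

lemma motzkin3Series_eq :
    motzkin3Series = 1 + 3 * X * motzkin3Series + X ^ 2 * motzkin3Series ^ 2 := by
  ext (_ | n)
  · simp [motzkin3Series, Motzkin3Path.card_zero]
  · rw [map_add, map_add, coeff_succ_X_sq_mul_sq, mul_right_comm, coeff_succ_mul_X,
      ← map_ofNat C 3, coeff_C_mul]
    simp [motzkin3Series, Motzkin3Path.card_succ]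

/-- The number of 3-coloured Motzkin paths of length `n` is the coefficient of `Xⁿ`
in the unique power series `M` with `M = 1 + 3XM + X²M²`. -/
theorem card_motzkin3_eq_coeff (M : PowerSeries ℚ)
    (hM : M = 1 + 3 * X * M + X ^ 2 * M ^ 2) (n : ℕ) :
    (Nat.card {l : List Step3 // l.length = n ∧ IsMotzkin3 l} : ℚ) = coeff n M := by
  rw [eq_of_eq_add_X_mul_add_X_sq_mul_sq hM motzkin3Series_eq, motzkin3Series, coeff_mk]
end

section
/- For every natural number n, the number of 2-coloured Motzkin paths of length n equals the Catalan number C(n+1). Equivalently, for n ≥ 1, the number of Dyck paths of length 2n equals the number of 2-coloured Motzkin paths of length n−1. -/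
/-- A step of a 2-coloured Motzkin path: an up-step, a down-step, or a horizontal
step in one of two colours. -/
inductive Step2 : Type
  | up : Step2
  | down : Step2
  | level : Fin 2 → Step2

/-- The value (height change) of a 2-coloured Motzkin step. -/
def Step2.val : Step2 → ℤ
  | .up => 1
  | .down => -1
  | .level _ => 0

/-- A step of a Dyck path: an up-step or a down-step. -/
inductive StepUD : Type
  | up : StepUD
  | down : StepUD

/-- The value (height change) of a Dyck step. -/
def StepUD.val : StepUD → ℤ
  | .up => 1
  | .down => -1

/-- A list of steps is a 2-coloured Motzkin path if every prefix sum of the values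
is nonnegative and the total sum is `0`. -/
def IsMotzkin2 (l : List Step2) : Prop :=
  (∀ t : List Step2, t <+: l → 0 ≤ (t.map Step2.val).sum) ∧ (l.map Step2.val).sum = 0

/-- A list of up/down steps is a Dyck path if every prefix sum of the values is
nonnegative and the total sum is `0`. -/
def IsDyck (l : List StepUD) : Prop :=
  (∀ t : List StepUD, t <+: l → 0 ≤ (t.map StepUD.val).sum) ∧ (l.map StepUD.val).sum = 0

/-! A 2-coloured Motzkin path `m` of length `n` is sent to the Dyck path `U w D` of length
`2n + 2`, where `w` replaces every step of `m` by two: up by `UU`, down by `DD`, and the two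
horizontal steps by `UD` and `DU`. The prefix sums of `w` at even positions are twice those of `m`,
and at odd positions they differ by `±1` from the preceding even one; hence `m` stays
nonnegative exactly when `w` stays above `-1`, i.e. when `U w D` is a Dyck path. Every nonempty
Dyck path is of this form, so Motzkin paths of length `n` are in bijection with Dyck paths of
length `2n + 2`, which Mathlib's `DyckWord` counts by `catalan (n + 1)`. -/

open List DyckStep

namespace List

variable {α : Type*}

lemma forall_prefix_cons_iff {p : List α → Prop} {a : α} {l : List α} :
    (∀ t, t <+: a :: l → p t) ↔ p [] ∧ ∀ t, t <+: l → p (a :: t) := by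
  simp only [prefix_cons_iff]
  constructor
  · intro h
    exact ⟨h [] (Or.inl rfl), fun t ht => h _ (Or.inr ⟨t, rfl, ht⟩)⟩
  · rintro ⟨hnil, hcons⟩ t (rfl | ⟨t, rfl, ht⟩)
    exacts [hnil, hcons t ht]

lemma forall_prefix_le_sum_map_cons_iff (f : α → ℤ) (c : ℤ) (a : α) (l : List α) :
    (∀ t, t <+: a :: l → c ≤ (t.map f).sum) ↔
      c ≤ 0 ∧ ∀ t, t <+: l → c - f a ≤ (t.map f).sum := by
  simp only [forall_prefix_cons_iff, map_nil, sum_nil, map_cons, sum_cons, sub_le_iff_le_add']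

end List

namespace StepUD

def equivDyckStep : StepUD ≃ DyckStep where
  toFun | up => U | down => D
  invFun | U => up | D => down
  left_inv s := by cases s <;> rfl
  right_inv s := by cases s <;> rfl

lemma sum_map_val_eq_count_sub_count (l : List StepUD) :
    (l.map val).sum = ((l.map equivDyckStep).count U : ℤ) - (l.map equivDyckStep).count D := by
  induction l with
  | nil => simp
  | cons s l ih =>
    cases s <;> simp [ih, val, equivDyckStep] <;> ring

lemma neg_one_le_val (s : StepUD) : -1 ≤ s.val := by
  cases s <;> decide

end StepUD

open StepUD in
lemma isDyck_iff_dyckWord (l : List StepUD) :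
    IsDyck l ↔ (l.map equivDyckStep).count U = (l.map equivDyckStep).count D ∧
      ∀ i, ((l.map equivDyckStep).take i).count D ≤ ((l.map equivDyckStep).take i).count U := by
  simp only [IsDyck, sum_map_val_eq_count_sub_count, ← map_take, sub_nonneg, sub_eq_zero,
    Nat.cast_le, Nat.cast_inj]
  constructor
  · rintro ⟨hprefix, htotal⟩
    exact ⟨htotal, fun i => hprefix _ (take_prefix i l)⟩
  · rintro ⟨htotal, htake⟩
    refine ⟨fun t ht => ?_, htotal⟩
    rw [prefix_iff_eq_take.mp ht]
    exact htake _

open StepUD in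
def isDyckEquivDyckWord : {l : List StepUD // IsDyck l} ≃ DyckWord where
  toFun l :=
    ⟨l.1.map equivDyckStep, ((isDyck_iff_dyckWord _).mp l.2).1,
      ((isDyck_iff_dyckWord _).mp l.2).2⟩
  invFun p :=
    ⟨p.toList.map equivDyckStep.symm, (isDyck_iff_dyckWord _).mpr <| by
      simpa [map_map] using ⟨p.count_U_eq_count_D, p.count_D_le_count_U⟩⟩
  left_inv l := by ext1; simp [map_map]
  right_inv p := by ext1; simp [map_map]

lemma card_isDyck_length_eq_catalan (n : ℕ) :
    Nat.card {l : List StepUD // l.length = 2 * n ∧ IsDyck l} = catalan n := by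
  have e : {l : List StepUD // l.length = 2 * n ∧ IsDyck l} ≃
      {p : DyckWord // p.semilength = n} :=
    (Equiv.subtypeEquivRight fun l => and_comm).trans <|
      (Equiv.subtypeSubtypeEquivSubtypeInter _ _).symm.trans <|
        isDyckEquivDyckWord.subtypeEquiv fun l => by
          have h : 2 * (isDyckEquivDyckWord l).semilength = l.1.length :=
            (isDyckEquivDyckWord l).two_mul_semilength_eq_length.trans (length_map _)
          omega
  rw [Nat.card_congr e, Nat.card_eq_fintype_card, DyckWord.card_dyckWord_semilength_eq_catalan]

lemma isDyck_up_cons_append_down_iff (w : List StepUD) :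
    IsDyck (.up :: w ++ [.down]) ↔
      (∀ t, t <+: w → -1 ≤ (t.map StepUD.val).sum) ∧ (w.map StepUD.val).sum = 0 := by
  simp only [IsDyck, cons_append, forall_prefix_le_sum_map_cons_iff, prefix_concat_iff]
  simp only [StepUD.val, map_cons, map_append, sum_cons, sum_append, map_nil, sum_nil]
  constructor
  · rintro ⟨⟨-, hprefix⟩, htotal⟩
    exact ⟨fun t ht => hprefix t (Or.inr ht), by omega⟩
  · rintro ⟨hprefix, htotal⟩
    refine ⟨⟨le_rfl, ?_⟩, by omega⟩
    rintro t (rfl | ht)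
    · simp [StepUD.val, htotal]
    · exact hprefix t ht

lemma IsDyck.exists_eq_up_cons_append_down {l : List StepUD} (hl : IsDyck l) (hne : l ≠ []) :
    ∃ w, l = .up :: w ++ [.down] := by
  obtain ⟨hprefix, htotal⟩ := hl
  obtain ⟨a, r, rfl⟩ := exists_cons_of_ne_nil hne
  have ha : a = .up := by
    have := hprefix [a] (singleton_prefix_cons_iff.mpr rfl)
    cases a
    · rfl
    · simp [StepUD.val] at this
  subst ha
  obtain rfl | ⟨w, b, rfl⟩ := eq_nil_or_concat' r
  · simp [StepUD.val] at htotal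
  have hb : b = .down := by
    have := hprefix (.up :: w) ⟨[b], by simp⟩
    cases b
    · simp [StepUD.val] at this htotal
      omega
    · rfl
  exact ⟨w, by rw [hb, cons_append]⟩

namespace Step2

def equivProd : Step2 ≃ StepUD × StepUD where
  toFun
    | up => (.up, .up)
    | down => (.down, .down)
    | level c => if c = 0 then (.up, .down) else (.down, .up)
  invFun
    | (.up, .up) => up
    | (.down, .down) => down
    | (.up, .down) => level 0
    | (.down, .up) => level 1
  left_inv a := by
    rcases a with _ | _ | c
    · rfl
    · rfl
    · fin_cases c <;> rfl
  right_inv p := by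
    rcases p with ⟨_ | _, _ | _⟩ <;> rfl

def toSteps (a : Step2) : List StepUD := [(equivProd a).1, (equivProd a).2]

lemma sum_map_val_toSteps (a : Step2) : ((toSteps a).map StepUD.val).sum = 2 * a.val := by
  rcases a with _ | _ | c
  · rfl
  · rfl
  · fin_cases c <;> rfl

lemma length_flatMap_toSteps (m : List Step2) : (m.flatMap toSteps).length = 2 * m.length := by
  induction m with
  | nil => rfl
  | cons a m ih =>
    simp only [flatMap_cons, toSteps, cons_append, nil_append, length_cons, ih]
    ring

lemma sum_map_val_flatMap_toSteps (m : List Step2) :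
    ((m.flatMap toSteps).map StepUD.val).sum = 2 * (m.map val).sum := by
  induction m with
  | nil => rfl
  | cons a m ih =>
    rw [flatMap_cons, map_append, sum_append, ih, sum_map_val_toSteps, map_cons, sum_cons]
    ring

lemma flatMap_toSteps_injective : Function.Injective fun m : List Step2 => m.flatMap toSteps
  | [], [], _ => rfl
  | [], _ :: _, h => by simp [toSteps] at h
  | _ :: _, [], h => by simp [toSteps] at h
  | a :: m, a' :: m', h => by
    simp only [flatMap_cons, toSteps, cons_append, cons.injEq, nil_append] at h
    obtain ⟨h₁, h₂, h⟩ := h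
    rw [equivProd.injective (Prod.ext h₁ h₂), flatMap_toSteps_injective h]

lemma exists_flatMap_toSteps_eq :
    ∀ w : List StepUD, Even w.length → ∃ m : List Step2, m.flatMap toSteps = w
  | [], _ => ⟨[], rfl⟩
  | [_], h => by simp at h
  | a :: b :: w, h => by
    obtain ⟨m, rfl⟩ := exists_flatMap_toSteps_eq w (by simpa [Nat.even_add_one] using h)
    exact ⟨equivProd.symm (a, b) :: m, by simp [toSteps]⟩

lemma forall_prefix_flatMap_toSteps_iff (c : ℤ) (m : List Step2) :
    (∀ t, t <+: m.flatMap toSteps → 2 * c - 1 ≤ (t.map StepUD.val).sum) ↔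
      ∀ t, t <+: m → c ≤ (t.map val).sum := by
  induction m generalizing c with
  | nil => simp only [flatMap_nil, prefix_nil, forall_eq, map_nil, sum_nil]; omega
  | cons a m ih =>
    have hsum := sum_map_val_toSteps a
    have hfst := (equivProd a).1.neg_one_le_val
    simp only [toSteps, map_cons, map_nil, sum_cons, sum_nil] at hsum
    simp only [flatMap_cons, toSteps, cons_append, nil_append, forall_prefix_le_sum_map_cons_iff]
    rw [show 2 * c - 1 - (equivProd a).1.val - (equivProd a).2.val = 2 * (c - a.val) - 1 by omega,
      ih]
    constructor
    · rintro ⟨hc, -, hrest⟩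
      exact ⟨by omega, hrest⟩
    · rintro ⟨hc, hrest⟩
      exact ⟨by omega, by omega, hrest⟩

def toDyckPath (m : List Step2) : List StepUD := .up :: m.flatMap toSteps ++ [.down]

lemma isDyck_toDyckPath_iff (m : List Step2) : IsDyck (toDyckPath m) ↔ IsMotzkin2 m := by
  rw [toDyckPath, isDyck_up_cons_append_down_iff, IsMotzkin2, sum_map_val_flatMap_toSteps,
    ← forall_prefix_flatMap_toSteps_iff 0]
  simp

end Step2

lemma card_isMotzkin2_length_eq_card_isDyck (n : ℕ) :
    Nat.card {m : List Step2 // m.length = n ∧ IsMotzkin2 m} =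
      Nat.card {l : List StepUD // l.length = 2 * (n + 1) ∧ IsDyck l} := by
  refine Nat.card_eq_of_bijective (fun m => ⟨Step2.toDyckPath m.1, ?_, ?_⟩) ⟨?_, ?_⟩
  · simp only [Step2.toDyckPath, cons_append, length_cons, length_append,
      Step2.length_flatMap_toSteps, m.2.1, length_nil]
    ring
  · exact (Step2.isDyck_toDyckPath_iff _).mpr m.2.2
  · intro m m' h
    simp only [Subtype.mk.injEq, Step2.toDyckPath, cons_append, cons.injEq, true_and,
      append_left_inj] at h
    exact Subtype.ext (Step2.flatMap_toSteps_injective h)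
  · rintro ⟨l, hlen, hl⟩
    obtain ⟨w, rfl⟩ := hl.exists_eq_up_cons_append_down (ne_nil_of_length_pos (by omega))
    simp only [cons_append, length_cons, length_append, length_nil] at hlen
    obtain ⟨m, rfl⟩ := Step2.exists_flatMap_toSteps_eq w ⟨n, by omega⟩
    refine ⟨⟨m, ?_, (Step2.isDyck_toDyckPath_iff m).mp hl⟩, rfl⟩
    rw [Step2.length_flatMap_toSteps] at hlen
    omega

/-- The number of 2-coloured Motzkin paths of length `n` is the Catalan number
`C (n+1)`; equivalently, for `n ≥ 1` the Dyck paths of length `2n` are equinumerous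
with the 2-coloured Motzkin paths of length `n - 1`. -/
theorem card_motzkin2_eq_catalan :
    (∀ n : ℕ,
      Nat.card {l : List Step2 // l.length = n ∧ IsMotzkin2 l} = catalan (n + 1)) ∧
    ∀ n : ℕ, 1 ≤ n →
      Nat.card {l : List StepUD // l.length = 2 * n ∧ IsDyck l} =
        Nat.card {l : List Step2 // l.length = n - 1 ∧ IsMotzkin2 l} := by
  refine ⟨fun n => ?_, fun n hn => ?_⟩
  · rw [card_isMotzkin2_length_eq_card_isDyck, card_isDyck_length_eq_catalan]
  · obtain ⟨k, rfl⟩ := Nat.exists_eq_add_of_le' hn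
    rw [card_isMotzkin2_length_eq_card_isDyck, Nat.add_sub_cancel]
end

section
/- For every N ≥ 1, there is a bijection between the set of multi-edge trees of total multiplicity N — encoded as pairs (w, f) where w is a Dyck word of some semilength k ≥ 1 (encoding a plane tree with k edges) and f : Fin k → ℕ₊ assigns positive integer multiplicities to the k edges in preorder with Σ f = N — and the set of 3-coloured Motzkin paths of length N−1. -/
/-- A multi-edge tree of total multiplicity `N`, encoded as a pair `(w, f)` where
`w` is a Dyck word of some semilength `k ≥ 1` (encoding a plane tree with `k` edges)
and `f : Fin k → ℕ+` assigns positive multiplicities to the `k` edges in preorder,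
summing to `N`. -/
def MultiEdgeTree (N : ℕ) : Type :=
  {t : Σ k : ℕ, List StepUD × (Fin k → ℕ+) //
    1 ≤ t.1 ∧ t.2.1.length = 2 * t.1 ∧ IsDyck t.2.1 ∧ ∑ i, (t.2.2 i : ℕ) = N}


section IsBalanced

variable {α : Type*} {val : α → ℤ}

/-- `IsDyck` and `IsMotzkin3` are, by definition, `IsBalanced` for their step values. -/
def IsBalanced (val : α → ℤ) (l : List α) : Prop :=
  (∀ t, t <+: l → 0 ≤ (t.map val).sum) ∧ (l.map val).sum = 0

theorem isBalanced_nil : IsBalanced val [] :=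
  ⟨fun t ht => by simp [List.prefix_nil.mp ht], rfl⟩

theorem isBalanced_cons_iff_of_val_eq_zero {a : α} {l : List α} (ha : val a = 0) :
    IsBalanced val (a :: l) ↔ IsBalanced val l := by
  simp only [IsBalanced, List.prefix_cons_iff, List.map_cons, List.sum_cons, ha, zero_add]
  constructor
  · exact fun h => ⟨fun t ht => by simpa [ha] using h.1 (a :: t) (Or.inr ⟨t, rfl, ht⟩), h.2⟩
  · rintro ⟨h, hs⟩
    refine ⟨?_, hs⟩
    rintro t (rfl | ⟨t, rfl, ht⟩)
    · simp
    · simpa [ha] using h t ht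

theorem IsBalanced.cons_append_cons {u d : α} {A B : List α} (hu : val u = 1)
    (hd : val d = -1) (hA : IsBalanced val A) (hB : IsBalanced val B) :
    IsBalanced val (u :: (A ++ d :: B)) := by
  refine ⟨?_, by simp [hu, hd, hA.2, hB.2]⟩
  intro t ht
  rcases List.prefix_cons_iff.mp ht with rfl | ⟨t, rfl, ht'⟩
  · simp
  rcases List.prefix_or_prefix_of_prefix ht' (List.prefix_append A (d :: B)) with h | ⟨r, rfl⟩
  · have := hA.1 t h
    simp only [List.map_cons, List.sum_cons, hu]
    omega
  rcases List.prefix_cons_iff.mp ((List.prefix_append_right_inj A).mp ht') with rfl | ⟨s, rfl, hs⟩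
  · simp [hu, hA.2]
  · have := hB.1 s hs
    simp only [List.map_cons, List.map_append, List.sum_cons, List.sum_append, hu, hd, hA.2]
    omega

theorem exists_eq_append_cons_of_sum_neg {l t : List α} (ht : t <+: l)
    (hneg : (t.map val).sum < 0) :
    ∃ A d B, l = A ++ d :: B ∧ (∀ s, s <+: A → 0 ≤ (s.map val).sum) ∧
      (A.map val).sum + val d < 0 := by
  induction l using List.reverseRecOn generalizing t with
  | nil => simp [List.prefix_nil.mp ht] at hneg
  | append_singleton r a ih =>
    by_cases hr : ∀ s, s <+: r → 0 ≤ (s.map val).sum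
    · refine ⟨r, a, [], by simp, hr, ?_⟩
      rcases List.prefix_concat_iff.mp ht with rfl | ht
      · simpa using hneg
      · exact absurd (hr t ht) (not_le.mpr hneg)
    · push Not at hr
      obtain ⟨s, hs, hsneg⟩ := hr
      obtain ⟨A, d, B, rfl, hA, hd⟩ := ih hs hsneg
      exact ⟨A, d, B ++ [a], by simp, hA, hd⟩

/-- The first return to height zero of a balanced path starting with an up-step. -/
theorem IsBalanced.exists_eq_append_cons_of_cons (hv : ∀ a, -1 ≤ val a) {u : α}
    {l : List α} (hu : val u = 1) (hl : IsBalanced val (u :: l)) :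
    ∃ A d B, l = A ++ d :: B ∧ val d = -1 ∧ IsBalanced val A ∧ IsBalanced val B := by
  have hpre : ∀ t, t <+: l → -1 ≤ (t.map val).sum := fun t ht => by
    have := hl.1 (u :: t) (List.cons_prefix_cons.mpr ⟨rfl, ht⟩)
    simp only [List.map_cons, List.sum_cons, hu] at this
    omega
  have hsum : (l.map val).sum = -1 := by
    have := hl.2
    simp only [List.map_cons, List.sum_cons, hu] at this
    omega
  obtain ⟨A, d, B, rfl, hA, hAd⟩ :=
    exists_eq_append_cons_of_sum_neg (val := val) (List.prefix_refl l) (by omega)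
  have hA0 := hA A (List.prefix_refl A)
  have hAd' := hpre (A ++ [d]) (by simp)
  have hd := hv d
  simp only [List.map_append, List.map_cons, List.map_nil, List.sum_append, List.sum_cons,
    List.sum_nil, add_zero] at hAd' hsum
  refine ⟨A, d, B, rfl, by omega, ⟨hA, by omega⟩, fun t ht => ?_, by omega⟩
  have := hpre (A ++ d :: t) (by simpa using ht)
  simp only [List.map_append, List.map_cons, List.sum_append, List.sum_cons] at this
  omega

theorem IsBalanced.append_cons_inj {A A' B B' : List α} {d d' : α}
    (hA : IsBalanced val A) (hA' : IsBalanced val A') (hd : val d < 0) (hd' : val d' < 0)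
    (h : A ++ d :: B = A' ++ d' :: B') : A = A' ∧ d = d' ∧ B = B' := by
  suffices A = A' by subst this; simpa using h
  wlog hpre : A <+: A' generalizing A A' B B' d d'
  · have hpre' : A' <+: A := by
      rcases List.prefix_or_prefix_of_prefix (h ▸ List.prefix_append A (d :: B))
        (List.prefix_append A' (d' :: B')) with h | h
      · exact absurd h hpre
      · exact h
    exact (this hA' hA hd' hd h.symm hpre').symm
  obtain ⟨_ | ⟨x, c⟩, rfl⟩ := hpre
  · simp
  obtain ⟨rfl, -⟩ : d = x ∧ B = c ++ d' :: B' := by simpa using h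
  have := hA'.1 (A ++ [d]) (by simp)
  simp only [List.map_append, List.map_cons, List.map_nil, List.sum_append, List.sum_cons,
    List.sum_nil, hA.2, add_zero, zero_add] at this
  omega

@[elab_as_elim]
theorem IsBalanced.induction (hv : ∀ a, |val a| ≤ 1) {motive : List α → Prop}
    (nil : motive [])
    (level : ∀ a l, val a = 0 → IsBalanced val l → motive l → motive (a :: l))
    (upDown : ∀ u A d B, val u = 1 → val d = -1 → IsBalanced val A → IsBalanced val B →
      motive A → motive B → motive (u :: (A ++ d :: B)))
    {l : List α} (hl : IsBalanced val l) : motive l := by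
  induction hlen : l.length using Nat.strong_induction_on generalizing l with
  | _ n ih =>
  subst hlen
  rcases l with _ | ⟨a, l⟩
  · exact nil
  obtain ⟨hlo, hhi⟩ := abs_le.mp (hv a)
  have ha : 0 ≤ val a := by simpa using hl.1 [a] (by simp)
  rcases (show val a = 0 ∨ val a = 1 by omega) with h0 | h1
  · have hl' := (isBalanced_cons_iff_of_val_eq_zero h0).mp hl
    exact level a l h0 hl' (ih _ (by simp) hl' rfl)
  · obtain ⟨A, d, B, rfl, hd, hA, hB⟩ :=
      hl.exists_eq_append_cons_of_cons (fun a => (abs_le.mp (hv a)).1) h1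
    have hlenB : B.length < (a :: (A ++ d :: B)).length := by
      simp only [List.length_cons, List.length_append]
      omega
    exact upDown a A d B h1 hd hA hB (ih _ (by simp) hA rfl) (ih _ hlenB hB rfl)

end IsBalanced

theorem IsDyck.even_length {w : List StepUD} (hw : IsDyck w) : Even w.length := by
  have key : ∀ w : List StepUD, Even ((w.map StepUD.val).sum + w.length) := by
    intro w
    induction w with
    | nil => simp
    | cons a w ih =>
      cases a <;> simpa [StepUD.val, parity_simps, ← add_assoc] using ih
  simpa [hw.2] using key w

namespace BinaryTree

variable {α : Type*}

/-- In the encoding of plane trees used here, `node x a b` is a root edge labelled `x`, with the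
subtree `a` hanging from it and `b` the tree formed by the remaining root edges. -/
def dyckWord : BinaryTree α → List StepUD
  | nil => []
  | node _ a b => .up :: (a.dyckWord ++ .down :: b.dyckWord)

def preorder : BinaryTree α → List α
  | nil => []
  | node x a b => x :: (a.preorder ++ b.preorder)

theorem preorder_eq_nil_iff {t : BinaryTree α} : t.preorder = [] ↔ t = nil := by
  cases t <;> simp [preorder]

theorem isDyck_dyckWord (t : BinaryTree α) : IsDyck t.dyckWord := by
  induction t with
  | nil => exact isBalanced_nil
  | node _ a b iha ihb => exact IsBalanced.cons_append_cons rfl rfl iha ihb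

theorem length_dyckWord (t : BinaryTree α) : t.dyckWord.length = 2 * t.preorder.length := by
  induction t with
  | nil => rfl
  | node _ a b iha ihb =>
    simp only [dyckWord, preorder, List.length_cons, List.length_append, iha, ihb]
    ring

theorem dyckWord_preorder_injective :
    Function.Injective fun t : BinaryTree α => (t.dyckWord, t.preorder) := by
  intro t₁
  induction t₁ with
  | nil => rintro (_ | _) h <;> simp_all [dyckWord]
  | node x a b iha ihb =>
    rintro (_ | ⟨x', a', b'⟩) h
    · simp [dyckWord] at h
    simp only [dyckWord, preorder, Prod.mk.injEq, List.cons.injEq, true_and] at h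
    obtain ⟨hw, rfl, hL⟩ := h
    obtain ⟨ha, -, hb⟩ := IsBalanced.append_cons_inj (isDyck_dyckWord a) (isDyck_dyckWord a')
      (by simp [StepUD.val]) (by simp [StepUD.val]) hw
    have hlen : a.preorder.length = a'.preorder.length := by
      have := congrArg List.length ha
      rw [length_dyckWord, length_dyckWord] at this
      omega
    obtain ⟨ha', hb'⟩ := List.append_inj hL hlen
    rw [iha (Prod.ext ha ha'), ihb (Prod.ext hb hb')]

theorem exists_dyckWord_eq_preorder_eq {w : List StepUD} (hw : IsDyck w) :
    ∀ L : List α, w.length = 2 * L.length →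
      ∃ t : BinaryTree α, t.dyckWord = w ∧ t.preorder = L := by
  refine IsBalanced.induction (fun s => by cases s <;> simp [StepUD.val]) ?_ ?_ ?_ hw
  · intro L hL
    exact ⟨nil, rfl, (List.length_eq_zero_iff.mp (by simpa using hL.symm)).symm⟩
  · rintro (_ | _) _ h <;> simp [StepUD.val] at h
  · rintro (_ | _) A (_ | _) B hu hd hA - ihA ihB L hL <;> simp [StepUD.val] at hu hd
    obtain ⟨k, hk⟩ := IsDyck.even_length hA
    simp only [List.length_cons, List.length_append] at hL
    obtain ⟨x, L, rfl⟩ := List.exists_cons_of_length_pos (by omega : 0 < L.length)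
    simp only [List.length_cons] at hL
    obtain ⟨a, ha, ha'⟩ := ihA (L.take k) (by rw [List.length_take]; omega)
    obtain ⟨b, hb, hb'⟩ := ihB (L.drop k) (by rw [List.length_drop]; omega)
    exact ⟨node x a b, by simp [dyckWord, ha, hb], by simp [preorder, ha', hb']⟩

def weight : BinaryTree ℕ+ → ℕ
  | nil => 0
  | node p a b => p + a.weight + b.weight

theorem sum_preorder (t : BinaryTree ℕ+) : (t.preorder.map (↑)).sum = t.weight := by
  induction t with
  | nil => rfl
  | node p a b iha ihb => simp [preorder, weight, iha, ihb, add_assoc]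

end BinaryTree

inductive Motzkin3 : Type
  | nil : Motzkin3
  | level (c : Fin 3) (z : Motzkin3) : Motzkin3
  | upDown (z₁ z₂ : Motzkin3) : Motzkin3

namespace Motzkin3

def steps : Motzkin3 → List Step3
  | nil => []
  | level c z => .level c :: z.steps
  | upDown z₁ z₂ => .up :: (z₁.steps ++ .down :: z₂.steps)

theorem isMotzkin3_steps (z : Motzkin3) : IsMotzkin3 z.steps := by
  induction z with
  | nil => exact isBalanced_nil
  | level c z ih => exact (isBalanced_cons_iff_of_val_eq_zero (val := Step3.val) rfl).mpr ih
  | upDown z₁ z₂ ih₁ ih₂ => exact IsBalanced.cons_append_cons rfl rfl ih₁ ih₂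

theorem steps_injective : Function.Injective steps := by
  intro z₁
  induction z₁ with
  | nil => rintro (_ | _ | _) h <;> simp_all [steps]
  | level c z ih =>
    rintro (_ | ⟨c', z'⟩ | _) h <;>
      simp only [steps, List.cons.injEq, Step3.level.injEq, reduceCtorEq, false_and] at h
    rw [h.1, ih h.2]
  | upDown z₁ z₂ ih₁ ih₂ =>
    rintro (_ | _ | ⟨z₁', z₂'⟩) h <;>
      simp only [steps, reduceCtorEq, List.cons.injEq, true_and, false_and] at h
    obtain ⟨h₁, -, h₂⟩ := IsBalanced.append_cons_inj (isMotzkin3_steps z₁)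
      (isMotzkin3_steps z₁') (by simp [Step3.val]) (by simp [Step3.val]) h
    rw [ih₁ h₁, ih₂ h₂]

theorem exists_steps_eq {l : List Step3} (hl : IsMotzkin3 l) : ∃ z : Motzkin3, z.steps = l := by
  refine IsBalanced.induction (fun s => by cases s <;> simp [Step3.val]) ?_ ?_ ?_ hl
  · exact ⟨nil, rfl⟩
  · rintro (_ | _ | c) l h - ⟨z, rfl⟩ <;> simp [Step3.val] at h
    exact ⟨level c z, rfl⟩
  · rintro (_ | _ | _) A (_ | _ | _) B hu hd - - ⟨z₁, rfl⟩ ⟨z₂, rfl⟩ <;>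
      simp [Step3.val] at hu hd
    exact ⟨upDown z₁ z₂, rfl⟩

noncomputable def equivSteps (p : ℕ → Prop) :
    {z : Motzkin3 // p z.steps.length} ≃ {l : List Step3 // p l.length ∧ IsMotzkin3 l} :=
  Equiv.ofBijective (fun z => ⟨z.1.steps, z.2, isMotzkin3_steps z.1⟩) <| by
    refine ⟨fun z₁ z₂ h => Subtype.ext (steps_injective (congrArg Subtype.val h)), ?_⟩
    rintro ⟨l, hp, hl⟩
    obtain ⟨z, rfl⟩ := exists_steps_eq hl
    exact ⟨⟨z, hp⟩, rfl⟩

/-- The path of the tree `node (m + 1) a b`. -/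
def ofNode : ℕ → BinaryTree ℕ+ → BinaryTree ℕ+ → Motzkin3
  | m + 1, a, b => level 0 (ofNode m a b)
  | 0, .nil, .nil => nil
  | 0, .nil, .node p a b => level 1 (ofNode p.natPred a b)
  | 0, .node p a b, .nil => level 2 (ofNode p.natPred a b)
  | 0, .node p a b, .node p' a' b' => upDown (ofNode p.natPred a b) (ofNode p'.natPred a' b')
termination_by m a b => m + a.weight + b.weight
decreasing_by
  all_goals
    simp only [BinaryTree.weight, ← PNat.natPred_add_one, Nat.succ_eq_add_one]
    omega

def toNode : Motzkin3 → ℕ × BinaryTree ℕ+ × BinaryTree ℕ+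
  | nil => (0, .nil, .nil)
  | level 0 z => ((toNode z).1 + 1, (toNode z).2)
  | level 1 z => (0, .nil, .node (toNode z).1.succPNat (toNode z).2.1 (toNode z).2.2)
  | level 2 z => (0, .node (toNode z).1.succPNat (toNode z).2.1 (toNode z).2.2, .nil)
  | upDown z₁ z₂ => (0, .node (toNode z₁).1.succPNat (toNode z₁).2.1 (toNode z₁).2.2,
      .node (toNode z₂).1.succPNat (toNode z₂).2.1 (toNode z₂).2.2)

theorem toNode_ofNode (m : ℕ) (a b : BinaryTree ℕ+) : toNode (ofNode m a b) = (m, a, b) := by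
  induction m, a, b using ofNode.induct <;> simp_all [ofNode, toNode]

theorem ofNode_toNode (z : Motzkin3) : ofNode (toNode z).1 (toNode z).2.1 (toNode z).2.2 = z := by
  induction z with
  | nil => simp [toNode, ofNode]
  | level c z ih => fin_cases c <;> simp [toNode, ofNode, ih]
  | upDown z₁ z₂ ih₁ ih₂ => simp [toNode, ofNode, ih₁, ih₂]

theorem length_steps_ofNode (m : ℕ) (a b : BinaryTree ℕ+) :
    (ofNode m a b).steps.length = m + a.weight + b.weight := by
  induction m, a, b using ofNode.induct <;>
    simp_all only [ofNode, steps, List.length_cons, List.length_nil, List.length_append,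
      BinaryTree.weight, ← PNat.natPred_add_one, Nat.succ_eq_add_one, zero_add, add_zero] <;>
    omega

def toTree (z : Motzkin3) : BinaryTree ℕ+ :=
  .node (toNode z).1.succPNat (toNode z).2.1 (toNode z).2.2

theorem weight_toTree (z : Motzkin3) : z.toTree.weight = z.steps.length + 1 := by
  conv_rhs => rw [← ofNode_toNode z, length_steps_ofNode]
  simp only [toTree, BinaryTree.weight, Nat.succPNat_coe, Nat.succ_eq_add_one]
  ring

theorem toTree_injective : Function.Injective toTree := by
  intro z₁ z₂ h
  rw [← ofNode_toNode z₁, ← ofNode_toNode z₂]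
  simp only [toTree, BinaryTree.node.injEq, Nat.succPNat_inj] at h
  rw [h.1, h.2.1, h.2.2]

theorem exists_toTree_eq {t : BinaryTree ℕ+} (ht : t ≠ .nil) : ∃ z : Motzkin3, z.toTree = t := by
  obtain ⟨p, a, b, rfl⟩ : ∃ p a b, t = .node p a b := by cases t <;> simp_all
  exact ⟨ofNode p.natPred a b, by simp [toTree, toNode_ofNode]⟩

noncomputable def equivTree (n : ℕ) :
    {z : Motzkin3 // z.steps.length = n} ≃ {t : BinaryTree ℕ+ // t ≠ .nil ∧ t.weight = n + 1} :=
  Equiv.ofBijective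
    (fun z : {z : Motzkin3 // z.steps.length = n} =>
      ⟨z.1.toTree, by simp [toTree], by rw [weight_toTree, z.2]⟩) <| by
    refine ⟨fun z₁ z₂ h => Subtype.ext (toTree_injective (congrArg Subtype.val h)), ?_⟩
    rintro ⟨t, ht, hw⟩
    obtain ⟨z, rfl⟩ := exists_toTree_eq ht
    exact ⟨⟨z, by simpa [weight_toTree] using hw⟩, rfl⟩

end Motzkin3

namespace MultiEdgeTree

def ofTree {N : ℕ} (t : {t : BinaryTree ℕ+ // t ≠ .nil ∧ t.weight = N}) : MultiEdgeTree N :=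
  ⟨⟨t.1.preorder.length, t.1.dyckWord, t.1.preorder.get⟩,
    List.length_pos_iff.mpr (mt BinaryTree.preorder_eq_nil_iff.mp t.2.1), t.1.length_dyckWord,
    t.1.isDyck_dyckWord,
    (Fin.sum_univ_fun_getElem _ PNat.val).trans ((BinaryTree.sum_preorder _).trans t.2.2)⟩

theorem ofTree_bijective (N : ℕ) : Function.Bijective (ofTree (N := N)) := by
  constructor
  · intro t₁ t₂ h
    have := congrArg (fun x : MultiEdgeTree N => (x.1.2.1, List.ofFn x.1.2.2)) h
    simp only [ofTree, List.ofFn_get] at this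
    exact Subtype.ext (BinaryTree.dyckWord_preorder_injective this)
  · rintro ⟨⟨k, w, f⟩, hk, hlen, hw, hsum⟩
    obtain ⟨t, rfl, hf⟩ := BinaryTree.exists_dyckWord_eq_preorder_eq hw (List.ofFn f) (by simpa)
    obtain rfl : t.preorder.length = k := by simp [hf]
    refine ⟨⟨t, ?_, ?_⟩, ?_⟩
    · rintro rfl
      simp [BinaryTree.preorder] at hk
    · rw [← hsum, ← BinaryTree.sum_preorder]
      simpa [List.map_ofFn, List.sum_ofFn] using congrArg (fun l => (l.map PNat.val).sum) hf
    · obtain rfl : t.preorder.get = f := List.ofFn_inj.mp (by rw [List.ofFn_get]; exact hf)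
      rfl

end MultiEdgeTree

/-- For every `N ≥ 1` there is a bijection between multi-edge trees of total
multiplicity `N` and 3-coloured Motzkin paths of length `N - 1`. -/
theorem multiEdgeTree_equiv_motzkin3 (N : ℕ) (hN : 1 ≤ N) :
    Nonempty (MultiEdgeTree N ≃
      {l : List Step3 // l.length = N - 1 ∧ IsMotzkin3 l}) := by
  obtain ⟨n, rfl⟩ := Nat.exists_eq_add_of_le' hN
  rw [Nat.add_sub_cancel]
  exact ⟨(Equiv.ofBijective _ (MultiEdgeTree.ofTree_bijective (n + 1))).symm.trans
    ((Motzkin3.equivTree n).symm.trans (Motzkin3.equivSteps (· = n)))⟩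
end

section
/- Let F be the unique formal power series over ℚ with (1 - X)·F = (1 - X) + X·F², and let M be the unique formal power series over ℚ with M = 1 + 3·X·M + X²·M². Then for every n ≥ 1, the coefficient of Xⁿ in F equals the coefficient of X^{n-1} in M; i.e., multi-edge trees with total multiplicity n are equinumerous with 3-coloured Motzkin paths of length n−1. -/
open PowerSeries

/-! Shifting a 3-coloured Motzkin series, `G = 1 + X * M`, turns `M = 1 + 3XM + X²M²` into the
multi-edge tree equation `(1 - X) G = (1 - X) + X G²`. That equation has only one solution: for two
solutions `F`, `G` the difference factors as `(1 - X - X (F + G)) (F - G) = 0`, and the first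
factor has constant coefficient `1`, so `F = G`. -/

namespace PowerSeries

variable {R : Type*} [CommRing R]

theorem IsMultiEdgeTreeGF.eq [NoZeroDivisors R] [Nontrivial R] {F G : R⟦X⟧}
    (hF : IsMultiEdgeTreeGF F) (hG : IsMultiEdgeTreeGF G) : F = G := by
  have hfactor : (1 - X - X * (F + G)) * (F - G) = 0 := by
    unfold IsMultiEdgeTreeGF at hF hG
    linear_combination hF - hG
  have hne : (1 - X - X * (F + G) : R⟦X⟧) ≠ 0 := fun h => by
    simpa using congrArg constantCoeff h
  exact sub_eq_zero.mp ((mul_eq_zero.mp hfactor).resolve_left hne)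

theorem coeff_succ_one_add_X_mul (M : R⟦X⟧) (n : ℕ) : coeff (n + 1) (1 + X * M) = coeff n M := by
  rw [map_add, coeff_one, if_neg n.succ_ne_zero, zero_add, coeff_succ_X_mul]

end PowerSeries

/-- The coefficient of `Xⁿ` (for `n ≥ 1`) in the generating function `F` of
multi-edge trees equals the coefficient of `X^{n-1}` in the generating function `M`
of 3-coloured Motzkin paths. -/
theorem multi_edge_tree_coeff_eq_motzkin3_coeff (F M : PowerSeries ℚ)
    (hF : (1 - X) * F = (1 - X) + X * F ^ 2)
    (hM : M = 1 + 3 * X * M + X ^ 2 * M ^ 2) :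
    ∀ n : ℕ, 1 ≤ n → coeff n F = coeff (n - 1) M := by
  have hFM : F = 1 + X * M := IsMultiEdgeTreeGF.eq hF (isMultiEdgeTreeGF_one_add_X_mul hM)
  intro n hn
  obtain ⟨m, rfl⟩ := Nat.exists_eq_add_of_le' hn
  rw [hFM, coeff_succ_one_add_X_mul, Nat.add_sub_cancel]
end
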